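/- Let k ≥ 3 and let T be any graph obtained from the star K_{1,k} by applying a finite sequence of (k − 1)-leaf support vertex additions. Then T has maximum degree k and satisfies Z(T) = (k − 2)·β(T) + 1; that is, every graph in this family attains equality in the bound Z(G) ≤ (Δ − 2)·β(G) + 1. -/

import Mathlib

open SimpleGraph

namespace ZFPaper

variable {V : Type*} {W : Type*}

/-- The degree of a vertex, as the cardinality of its neighbor set. -/
noncomputable def degSet (G : SimpleGraph V) (v : V) : ℕ := (G.neighborSet v).ncard

/-- The maximum degree of a graph. -/
noncomputable def maxDeg (G : SimpleGraph V) : ℕ := sSup {d : ℕ | ∃ v, degSet G v = d}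

/-- The minimum degree of a graph. -/
noncomputable def minDeg (G : SimpleGraph V) : ℕ := sInf {d : ℕ | ∃ v, degSet G v = d}

/-- A set of vertices is a vertex cover if every edge has an endpoint in it. -/
def IsVC (G : SimpleGraph V) (C : Set V) : Prop :=
  ∀ ⦃u w : V⦄, G.Adj u w → u ∈ C ∨ w ∈ C

/-- The vertex cover number β(G). -/
noncomputable def vcNum (G : SimpleGraph V) : ℕ :=
  sInf {m : ℕ | ∃ C : Set V, IsVC G C ∧ C.ncard = m}

/-- A set of vertices is independent if its vertices are pairwise non-adjacent. -/
def IsIndep (G : SimpleGraph V) (S : Set V) : Prop :=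
  ∀ ⦃u : V⦄, u ∈ S → ∀ ⦃w : V⦄, w ∈ S → ¬ G.Adj u w

/-- The independence number α(G). -/
noncomputable def indepNum (G : SimpleGraph V) : ℕ :=
  sSup {m : ℕ | ∃ S : Set V, IsIndep G S ∧ S.ncard = m}

/-- `Forced G B v` means that, starting from the blue set `B`, the vertex `v` is
eventually colored blue by the zero forcing process: a blue vertex with a unique
white neighbor forces that neighbor to become blue. -/
inductive Forced (G : SimpleGraph V) (B : Set V) : V → Prop
  | init : ∀ v ∈ B, Forced G B v
  | force : ∀ u w : V, Forced G B u → G.Adj u w →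
      (∀ x : V, G.Adj u x → x ≠ w → Forced G B x) → Forced G B w

/-- A zero forcing set: iterating the forcing process colors every vertex blue. -/
def IsZFS (G : SimpleGraph V) (B : Set V) : Prop := ∀ v : V, Forced G B v

/-- The zero forcing number Z(G). -/
noncomputable def zfNum (G : SimpleGraph V) : ℕ :=
  sInf {m : ℕ | ∃ B : Set V, IsZFS G B ∧ B.ncard = m}

/-- A graph is claw-free if it has no induced `K_{1,3}`. -/
def ClawFree (G : SimpleGraph V) : Prop :=
  ¬ ∃ (v a b c : V), G.Adj v a ∧ G.Adj v b ∧ G.Adj v c ∧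
      a ≠ b ∧ a ≠ c ∧ b ≠ c ∧ ¬ G.Adj a b ∧ ¬ G.Adj a c ∧ ¬ G.Adj b c

/-- The join `G ∨ H` of two graphs: disjoint union plus all edges between the parts. -/
def joinG (G : SimpleGraph V) (H : SimpleGraph W) : SimpleGraph (V ⊕ W) where
  Adj a b :=
    (∃ u v, a = Sum.inl u ∧ b = Sum.inl v ∧ G.Adj u v) ∨
    (∃ u v, a = Sum.inr u ∧ b = Sum.inr v ∧ H.Adj u v) ∨
    (∃ u v, a = Sum.inl u ∧ b = Sum.inr v) ∨
    (∃ u v, a = Sum.inr u ∧ b = Sum.inl v)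
  symm := by
    constructor
    rintro a b (⟨u, v, rfl, rfl, h⟩ | ⟨u, v, rfl, rfl, h⟩ | ⟨u, v, rfl, rfl⟩ | ⟨u, v, rfl, rfl⟩)
    · exact Or.inl ⟨v, u, rfl, rfl, h.symm⟩
    · exact Or.inr (Or.inl ⟨v, u, rfl, rfl, h.symm⟩)
    · exact Or.inr (Or.inr (Or.inr ⟨v, u, rfl, rfl⟩))
    · exact Or.inr (Or.inr (Or.inl ⟨v, u, rfl, rfl⟩))
  loopless := by
    constructor
    rintro a (⟨u, v, rfl, h, hadj⟩ | ⟨u, v, rfl, h, hadj⟩ | ⟨u, v, rfl, h⟩ | ⟨u, v, rfl, h⟩) <;>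
      simp_all

/-- The graph obtained from `G` by a `k`-leaf support vertex addition at `v`:
a new support vertex `w = Sum.inr none` is attached to `v`, and `k` new leaves
`Sum.inr (some i)` are attached to `w`. -/
def lsva (G : SimpleGraph V) (v : V) (k : ℕ) : SimpleGraph (V ⊕ Option (Fin k)) where
  Adj a b :=
    (∃ x y, a = Sum.inl x ∧ b = Sum.inl y ∧ G.Adj x y) ∨
    (a = Sum.inl v ∧ b = Sum.inr none) ∨
    (a = Sum.inr none ∧ b = Sum.inl v) ∨
    (∃ i : Fin k, a = Sum.inr none ∧ b = Sum.inr (some i)) ∨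
    (∃ i : Fin k, a = Sum.inr (some i) ∧ b = Sum.inr none)
  symm := by
    constructor
    rintro a b (⟨x, y, rfl, rfl, h⟩ | ⟨rfl, rfl⟩ | ⟨rfl, rfl⟩ | ⟨i, rfl, rfl⟩ | ⟨i, rfl, rfl⟩)
    · exact Or.inl ⟨y, x, rfl, rfl, h.symm⟩
    · exact Or.inr (Or.inr (Or.inl ⟨rfl, rfl⟩))
    · exact Or.inr (Or.inl ⟨rfl, rfl⟩)
    · exact Or.inr (Or.inr (Or.inr (Or.inr ⟨i, rfl, rfl⟩)))
    · exact Or.inr (Or.inr (Or.inr (Or.inl ⟨i, rfl, rfl⟩)))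
  loopless := by
    constructor
    rintro a (⟨x, y, rfl, h, hadj⟩ | ⟨rfl, h⟩ | ⟨rfl, h⟩ | ⟨i, rfl, h⟩ | ⟨i, rfl, h⟩) <;> simp_all

/-- `LSVAChain m G H` means `H` is obtained from `G` by a finite sequence of
`m`-leaf support vertex additions (each applied at a vertex of degree at most `m-1`). -/
inductive LSVAChain (m : ℕ) : {α : Type} → SimpleGraph α → {β : Type} → SimpleGraph β → Prop
  | refl {α : Type} (G : SimpleGraph α) : LSVAChain m G G
  | step {α : Type} {G : SimpleGraph α} {β : Type} {H : SimpleGraph β} (v : β)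
      (hv : (H.neighborSet v).ncard ≤ m - 1) :
      LSVAChain m G H → LSVAChain m G (lsva H v m)

/-- The graph obtained from the complete graph `K_n` by attaching one pendant
vertex to each vertex in the set `A`. -/
def pendantKn (n : ℕ) (A : Finset (Fin n)) : SimpleGraph (Fin n ⊕ {a : Fin n // a ∈ A}) where
  Adj a b :=
    (∃ x y : Fin n, a = Sum.inl x ∧ b = Sum.inl y ∧ x ≠ y) ∨
    (∃ p : {a : Fin n // a ∈ A}, a = Sum.inl p.1 ∧ b = Sum.inr p) ∨
    (∃ p : {a : Fin n // a ∈ A}, a = Sum.inr p ∧ b = Sum.inl p.1)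
  symm := by
    constructor
    rintro a b (⟨x, y, rfl, rfl, h⟩ | ⟨p, rfl, rfl⟩ | ⟨p, rfl, rfl⟩)
    · exact Or.inl ⟨y, x, rfl, rfl, h.symm⟩
    · exact Or.inr (Or.inr ⟨p, rfl, rfl⟩)
    · exact Or.inr (Or.inl ⟨p, rfl, rfl⟩)
  loopless := by
    constructor
    rintro a (⟨x, y, rfl, h, hne⟩ | ⟨p, rfl, h⟩ | ⟨p, rfl, h⟩) <;> simp_all

/-- The graph obtained from a cycle `C_k` with vertices `v_1, …, v_k` (the `Sum.inl`
vertices) together with disjoint complete graphs `K_{n i}` (the `Sum.inr` vertices),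
where every vertex of the `i`-th complete graph is joined to both `v_i` and `v_{i+1}`
(indices mod `k`). -/
def cycleCliques (k : ℕ) (n : Fin k → ℕ) :
    SimpleGraph (Fin k ⊕ Σ i : Fin k, Fin (n i)) where
  Adj a b :=
    match a, b with
    | Sum.inl i, Sum.inl j =>
        i ≠ j ∧ ((j : ℕ) = ((i : ℕ) + 1) % k ∨ (i : ℕ) = ((j : ℕ) + 1) % k)
    | Sum.inl j, Sum.inr s => (j : ℕ) = (s.1 : ℕ) ∨ (j : ℕ) = ((s.1 : ℕ) + 1) % k
    | Sum.inr s, Sum.inl j => (j : ℕ) = (s.1 : ℕ) ∨ (j : ℕ) = ((s.1 : ℕ) + 1) % k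
    | Sum.inr s, Sum.inr t => s ≠ t ∧ s.1 = t.1
  symm := by
    constructor
    rintro (i | s) (j | t) h
    · exact ⟨Ne.symm h.1, h.2.symm⟩
    · exact h
    · exact h
    · exact ⟨Ne.symm h.1, h.2.symm⟩
  loopless := by
    constructor
    rintro (i | s) h
    · exact h.1 rfl
    · exact h.1 rfl


/-! The star `K_{1,k}` is itself the `(k-1)`-leaf support vertex addition to `K_1`, for which
`Z = 1` and `β = 0`. So it suffices that an `m`-leaf support vertex addition with `m ≥ 2` raises
`Z` by exactly `m - 1` and `β` by exactly `1`, while the degrees stay at most `m + 1 = k` and the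
new support vertex has degree exactly `k`.

For `β`: the support vertex covers every new edge, and every cover meets some new edge.
For `Z`: a forcing set of `H` plus all new leaves but one is forcing (a leaf forces the support
vertex, which forces the last leaf at the end). Conversely a forcing set contains all but at most
one of the twin leaves. If it misses a leaf, the support vertex can force that leaf only after
the old vertex `v` is blue, so the trace of the set on `H` is already forcing; otherwise the trace
together with `v` is forcing. -/

lemma ncard_eq_ncard_preimage_inl_add_ncard_preimage_inr {α β : Type*} [Finite α] [Finite β]
    (S : Set (α ⊕ β)) : S.ncard = (Sum.inl ⁻¹' S).ncard + (Sum.inr ⁻¹' S).ncard := by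
  have hS : S = Sum.inl '' (Sum.inl ⁻¹' S) ∪ Sum.inr '' (Sum.inr ⁻¹' S) := by
    ext (x | y) <;> simp
  nth_rewrite 1 [hS]
  rw [Set.ncard_union_eq (Set.disjoint_left.2 (by simp)),
    Set.ncard_image_of_injective _ Sum.inl_injective,
    Set.ncard_image_of_injective _ Sum.inr_injective]

section Forcing

variable {α β : Type*} {G : SimpleGraph α} {G' : SimpleGraph β}

lemma not_forced_empty {x : α} : ¬ Forced G ∅ x := by
  intro h
  induction h with
  | init x hx => exact hx
  | force _ _ _ _ _ ih => exact ih

lemma Forced.of_adj_of_unique {B : Set α} {u w : α} (hu : Forced G B u) (hadj : G.Adj u w)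
    (huniq : ∀ x, G.Adj u x → x = w) : Forced G B w :=
  .force u w hu hadj fun x hx hxw => absurd (huniq x hx) hxw

lemma Forced.map (f : G ↪g G') {B : Set α} {B' : Set β} (hB : f '' B ⊆ B')
    (hout : ∀ u y, G'.Adj (f u) y → y ∉ Set.range f → Forced G' B' y) {x : α}
    (h : Forced G B x) : Forced G' B' (f x) := by
  induction h with
  | init x hx => exact .init _ (hB ⟨x, hx, rfl⟩)
  | force u w _ hadj _ ihu ihside =>
    refine .force (f u) (f w) ihu (f.map_adj_iff.2 hadj) fun y hy hyw => ?_
    by_cases hy' : y ∈ Set.range f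
    · obtain ⟨y, rfl⟩ := hy'
      exact ihside y (f.map_adj_iff.1 hy) fun h => hyw (h ▸ rfl)
    · exact hout u y hy hy'

lemma Forced.comap (f : G ↪g G') {B : Set β} {A : Set α}
    (hA : ∀ u y, G'.Adj (f u) y → y ∉ Set.range f → u ∈ A) {x : α}
    (h : Forced G' B (f x)) : Forced G (f ⁻¹' B ∪ A) x := by
  generalize hs : f x = s at h
  induction h generalizing x with
  | init s hs' =>
    subst hs
    exact .init _ (Or.inl hs')
  | force u s _ hadj _ ihu ihside =>
    subst hs
    by_cases hu : u ∈ Set.range f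
    · obtain ⟨u, rfl⟩ := hu
      refine .force u x (ihu rfl) (f.map_adj_iff.1 hadj) fun y hy hyx => ?_
      exact ihside (f y) (f.map_adj_iff.2 hy) (f.injective.ne hyx) rfl
    · exact .init _ (Or.inr (hA x u hadj.symm hu))

/-- Each of the two leaves can only be forced by `c`, which needs the other one blue first. -/
lemma not_forced_of_twin_leaves {B : Set α} {c l₁ l₂ : α} (hne : l₁ ≠ l₂)
    (h₁ : ∀ u, G.Adj u l₁ ↔ u = c) (h₂ : ∀ u, G.Adj u l₂ ↔ u = c)
    (hB₁ : l₁ ∉ B) (hB₂ : l₂ ∉ B) : ¬ Forced G B l₁ := by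
  suffices ∀ s, Forced G B s → s ≠ l₁ ∧ s ≠ l₂ from fun h => (this l₁ h).1 rfl
  intro s hs
  induction hs with
  | init x hx => exact ⟨fun h => hB₁ (h ▸ hx), fun h => hB₂ (h ▸ hx)⟩
  | force u w _ hadj _ _ ihside =>
    constructor
    · rintro rfl
      exact (ihside l₂ ((h₂ u).2 ((h₁ u).1 hadj)) hne.symm).2 rfl
    · rintro rfl
      exact (ihside l₁ ((h₁ u).2 ((h₂ u).1 hadj)) hne).1 rfl

lemma IsZFS.card_sub_one_le_ncard_preimage_leaves {ι : Type*} [Finite ι] {B : Set α}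
    (hB : IsZFS G B) {f : ι → α} (hf : f.Injective) {c : α}
    (hleaf : ∀ i u, G.Adj u (f i) ↔ u = c) : Nat.card ι - 1 ≤ (f ⁻¹' B).ncard := by
  have hcompl : (f ⁻¹' B)ᶜ.ncard ≤ 1 := by
    refine (Set.ncard_le_one).2 fun i hi j hj => by_contra fun hij => ?_
    exact not_forced_of_twin_leaves (hf.ne hij) (hleaf i) (hleaf j) hi hj (hB (f i))
  have := Set.ncard_add_ncard_compl (f ⁻¹' B)
  omega

end Forcing

section Numbers

variable {α β : Type*} {G : SimpleGraph α} {G' : SimpleGraph β}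

lemma zfNum_le {B : Set α} (hB : IsZFS G B) : zfNum G ≤ B.ncard :=
  Nat.sInf_le ⟨B, hB, rfl⟩

lemma exists_isZFS_ncard_eq_zfNum (G : SimpleGraph α) :
    ∃ B, IsZFS G B ∧ B.ncard = zfNum G :=
  Nat.sInf_mem (s := {m | ∃ B : Set α, IsZFS G B ∧ B.ncard = m})
    ⟨_, Set.univ, fun x => .init x trivial, rfl⟩

lemma vcNum_le {C : Set α} (hC : IsVC G C) : vcNum G ≤ C.ncard :=
  Nat.sInf_le ⟨C, hC, rfl⟩

lemma exists_isVC_ncard_eq_vcNum (G : SimpleGraph α) :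
    ∃ C, IsVC G C ∧ C.ncard = vcNum G :=
  Nat.sInf_mem (s := {m | ∃ C : Set α, IsVC G C ∧ C.ncard = m})
    ⟨_, Set.univ, fun _ _ _ => Or.inl trivial, rfl⟩

lemma zfNum_pos [Finite α] [Nonempty α] : 0 < zfNum G := by
  obtain ⟨B, hB, hcard⟩ := exists_isZFS_ncard_eq_zfNum G
  rw [← hcard, Set.ncard_pos]
  by_contra hempty
  rw [Set.not_nonempty_iff_eq_empty] at hempty
  exact not_forced_empty (hempty ▸ hB (Classical.arbitrary α))

lemma zfNum_eq_one [Unique α] : zfNum G = 1 := by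
  refine le_antisymm ?_ zfNum_pos
  simpa using zfNum_le (G := G) (B := Set.univ) fun x => .init x trivial

lemma vcNum_bot : vcNum (⊥ : SimpleGraph α) = 0 := by
  simpa using vcNum_le (G := ⊥) (C := ∅) fun _ _ h => h.elim

lemma zfNum_le_of_iso (e : G ≃g G') : zfNum G' ≤ zfNum G := by
  obtain ⟨B, hB, hcard⟩ := exists_isZFS_ncard_eq_zfNum G
  have hB' : IsZFS G' (e '' B) := fun y => by
    simpa using (hB (e.symm y)).map e.toEmbedding (by simp) (by simp)
  calc zfNum G' ≤ (e '' B).ncard := zfNum_le hB'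
    _ = zfNum G := by rw [Set.ncard_image_of_injective _ e.injective, hcard]

lemma zfNum_congr (e : G ≃g G') : zfNum G = zfNum G' :=
  le_antisymm (zfNum_le_of_iso e.symm) (zfNum_le_of_iso e)

lemma vcNum_le_of_iso (e : G ≃g G') : vcNum G' ≤ vcNum G := by
  obtain ⟨C, hC, hcard⟩ := exists_isVC_ncard_eq_vcNum G
  have hC' : IsVC G' (e '' C) := fun x y hxy => by
    obtain ⟨x, rfl⟩ := e.surjective x
    obtain ⟨y, rfl⟩ := e.surjective y
    simpa [e.injective.mem_set_image] using hC (e.map_adj_iff.1 hxy)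
  calc vcNum G' ≤ (e '' C).ncard := vcNum_le hC'
    _ = vcNum G := by rw [Set.ncard_image_of_injective _ e.injective, hcard]

lemma vcNum_congr (e : G ≃g G') : vcNum G = vcNum G' :=
  le_antisymm (vcNum_le_of_iso e.symm) (vcNum_le_of_iso e)

lemma degSet_congr (e : G ≃g G') (x : α) : degSet G' (e x) = degSet G x := by
  rw [degSet, degSet, ← Set.ncard_image_of_injective _ e.injective]
  congr 1
  ext y
  obtain ⟨y, rfl⟩ := e.surjective y
  simp [e.map_adj_iff]

lemma maxDeg_eq_of_forall_le_of_exists_eq {k : ℕ} (hle : ∀ x, degSet G x ≤ k)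
    (hex : ∃ x, degSet G x = k) : maxDeg G = k := by
  obtain ⟨x, hx⟩ := hex
  have hbdd : BddAbove {d | ∃ x, degSet G x = d} := ⟨k, by rintro _ ⟨y, rfl⟩; exact hle y⟩
  exact le_antisymm (csSup_le ⟨_, x, rfl⟩ (by rintro _ ⟨y, rfl⟩; exact hle y))
    (le_csSup hbdd ⟨x, hx⟩)

end Numbers

section Lsva

variable {α : Type*} {H : SimpleGraph α} {v : α} {m : ℕ}

@[simp] lemma lsva_adj_inl_inl {x y : α} :
    (lsva H v m).Adj (.inl x) (.inl y) ↔ H.Adj x y := by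
  simp [lsva]

@[simp] lemma lsva_adj_inl_inr {x : α} {o : Option (Fin m)} :
    (lsva H v m).Adj (.inl x) (.inr o) ↔ x = v ∧ o = none := by
  simp [lsva, eq_comm]

@[simp] lemma lsva_adj_inr_inl {x : α} {o : Option (Fin m)} :
    (lsva H v m).Adj (.inr o) (.inl x) ↔ o = none ∧ x = v := by
  rw [adj_comm, lsva_adj_inl_inr, and_comm]

@[simp] lemma lsva_adj_none_inr {o : Option (Fin m)} :
    (lsva H v m).Adj (.inr none) (.inr o) ↔ o ≠ none := by
  cases o <;> simp [lsva]

@[simp] lemma lsva_adj_some_inr {i : Fin m} {o : Option (Fin m)} :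
    (lsva H v m).Adj (.inr (some i)) (.inr o) ↔ o = none := by
  cases o <;> simp [lsva]

lemma lsva_adj_leaf {i : Fin m} {u : α ⊕ Option (Fin m)} :
    (lsva H v m).Adj u (.inr (some i)) ↔ u = .inr none := by
  rcases u with x | (_ | j) <;> simp

def lsvaInl (H : SimpleGraph α) (v : α) (m : ℕ) : H ↪g lsva H v m :=
  ⟨⟨Sum.inl, Sum.inl_injective⟩, lsva_adj_inl_inl⟩

lemma degSet_lsva_inl_of_ne {x : α} (hx : x ≠ v) :
    degSet (lsva H v m) (.inl x) = degSet H x := by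
  have : (lsva H v m).neighborSet (.inl x) = Sum.inl '' H.neighborSet x := by
    ext (y | o) <;> simp [hx]
  rw [degSet, this, Set.ncard_image_of_injective _ Sum.inl_injective, degSet]

lemma degSet_lsva_inl_self [Finite α] : degSet (lsva H v m) (.inl v) = degSet H v + 1 := by
  have : (lsva H v m).neighborSet (.inl v) =
      insert (.inr none) (Sum.inl '' H.neighborSet v) := by
    ext (y | o) <;> simp [eq_comm]
  rw [degSet, this, Set.ncard_insert_of_notMem (by simp),
    Set.ncard_image_of_injective _ Sum.inl_injective, degSet]

lemma degSet_lsva_none [Finite α] : degSet (lsva H v m) (.inr none) = m + 1 := by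
  have : (lsva H v m).neighborSet (.inr none) =
      insert (.inl v) (Sum.inr '' Set.range some) := by
    ext (y | (_ | i)) <;> simp [eq_comm]
  rw [degSet, this, Set.ncard_insert_of_notMem (by simp),
    Set.ncard_image_of_injective _ Sum.inr_injective, ← Set.image_univ,
    Set.ncard_image_of_injective _ (Option.some_injective _)]
  simp

lemma degSet_lsva_some (i : Fin m) : degSet (lsva H v m) (.inr (some i)) = 1 := by
  have : (lsva H v m).neighborSet (.inr (some i)) = {.inr none} := by
    ext u
    rw [mem_neighborSet, adj_comm, lsva_adj_leaf, Set.mem_singleton_iff]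
  rw [degSet, this, Set.ncard_singleton]

lemma isZFS_lsva_of_isZFS {B : Set α} (hB : IsZFS H B) {e i₀ : Fin m} (hi₀ : i₀ ≠ e) :
    IsZFS (lsva H v m) (Sum.inl '' B ∪ Sum.inr '' (some '' {e}ᶜ)) := by
  set B' := Sum.inl '' B ∪ Sum.inr '' (some '' {e}ᶜ)
  have hleaf : ∀ i ≠ e, Forced (lsva H v m) B' (.inr (some i)) :=
    fun i hi => .init _ (Or.inr ⟨some i, ⟨i, hi, rfl⟩, rfl⟩)
  have hw : Forced (lsva H v m) B' (.inr none) :=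
    .of_adj_of_unique (hleaf i₀ hi₀) (by simp) fun x hx => by
      rwa [adj_comm, lsva_adj_leaf] at hx
  have hH : ∀ x, Forced (lsva H v m) B' (.inl x) := fun x =>
    (hB x).map (lsvaInl H v m) Set.subset_union_left fun u y hy hyr => by
      rcases y with y | o
      · exact absurd ⟨y, rfl⟩ hyr
      · obtain ⟨-, rfl⟩ := lsva_adj_inl_inr.1 hy
        exact hw
  rintro (x | _ | i)
  · exact hH x
  · exact hw
  · by_cases hi : i = e
    · subst hi
      refine .force _ _ hw (by simp) fun y hy hye => ?_
      rcases y with y | _ | j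
      · exact hH y
      · simp at hy
      · exact hleaf j fun hj => hye (hj ▸ rfl)
    · exact hleaf i hi

lemma zfNum_lsva_le [Finite α] (hm : 2 ≤ m) : zfNum (lsva H v m) ≤ zfNum H + (m - 1) := by
  obtain ⟨B, hB, hcard⟩ := exists_isZFS_ncard_eq_zfNum H
  let e : Fin m := ⟨0, by omega⟩
  let i₀ : Fin m := ⟨1, by omega⟩
  have hleaves : (Sum.inr '' (some '' {e}ᶜ) : Set (α ⊕ Option (Fin m))).ncard = m - 1 := by
    rw [Set.ncard_image_of_injective _ Sum.inr_injective,
      Set.ncard_image_of_injective _ (Option.some_injective _), Set.ncard_compl]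
    simp
  have hi₀ : i₀ ≠ e := by simp [e, i₀]
  calc zfNum (lsva H v m) ≤ _ := zfNum_le (isZFS_lsva_of_isZFS hB hi₀)
    _ = zfNum H + (m - 1) := by
      rw [Set.ncard_union_eq (Set.disjoint_left.2 (by simp)),
        Set.ncard_image_of_injective _ Sum.inl_injective, hcard, hleaves]

lemma IsZFS.of_lsva {B : Set (α ⊕ Option (Fin m))} (hB : IsZFS (lsva H v m) B) :
    IsZFS H (Sum.inl ⁻¹' B ∪ {v}) := fun x =>
  (hB (.inl x)).comap (lsvaInl H v m) fun u y hy hyr => by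
    rcases y with y | o
    · exact absurd ⟨y, rfl⟩ hyr
    · exact (lsva_adj_inl_inr.1 hy).1

/-- A white leaf `l` can only be forced by the support vertex, and only after `v`. -/
lemma forced_of_forced_lsva {B : Set (α ⊕ Option (Fin m))} {l : Fin m}
    (hl : .inr (some l) ∉ B) {s : α ⊕ Option (Fin m)} (hs : Forced (lsva H v m) B s) :
    (∀ x, s = .inl x → Forced H (Sum.inl ⁻¹' B) x) ∧
      (s = .inr (some l) → Forced H (Sum.inl ⁻¹' B) v) := by
  induction hs with
  | init s hsB =>
    refine ⟨?_, ?_⟩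
    · rintro x rfl
      exact .init x hsB
    · rintro rfl
      exact absurd hsB hl
  | force u s _ hadj _ ihu ihside =>
    refine ⟨?_, ?_⟩
    · rintro x rfl
      rcases u with u | o
      · refine .force u x (ihu.1 u rfl) (lsva_adj_inl_inl.1 hadj) fun z hz hzx => ?_
        exact (ihside (.inl z) (lsva_adj_inl_inl.2 hz) (by simpa using hzx)).1 z rfl
      · obtain ⟨rfl, rfl⟩ := lsva_adj_inr_inl.1 hadj
        exact (ihside (.inr (some l)) (by simp) (by simp)).2 rfl
    · rintro rfl
      obtain rfl := lsva_adj_leaf.1 hadj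
      exact (ihside (.inl v) (by simp) (by simp)).1 v rfl

lemma zfNum_add_le_zfNum_lsva [Finite α] (hm : 0 < m) :
    zfNum H + (m - 1) ≤ zfNum (lsva H v m) := by
  obtain ⟨B, hB, hcard⟩ := exists_isZFS_ncard_eq_zfNum (lsva H v m)
  set T : Set (Fin m) := (fun i => .inr (some i)) ⁻¹' B
  have hT : m - 1 ≤ T.ncard := by
    simpa using hB.card_sub_one_le_ncard_preimage_leaves (f := fun i => .inr (some i))
      (fun i j h => by simpa using h) fun i u => lsva_adj_leaf
  have hinr : T.ncard ≤ (Sum.inr ⁻¹' B).ncard := by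
    rw [← Set.ncard_image_of_injective _ (Option.some_injective _)]
    exact Set.ncard_le_ncard (by rintro _ ⟨i, hi, rfl⟩; exact hi)
  have hsplit := ncard_eq_ncard_preimage_inl_add_ncard_preimage_inr B
  by_cases hall : T = Set.univ
  · have hH := zfNum_le hB.of_lsva
    have := Set.ncard_union_le (Sum.inl ⁻¹' B) {v}
    rw [hall, Set.ncard_univ, Nat.card_eq_fintype_card, Fintype.card_fin] at hinr
    rw [Set.ncard_singleton] at this
    omega
  · obtain ⟨l, hl⟩ := (Set.ne_univ_iff_exists_notMem T).1 hall
    have hH := zfNum_le (G := H) fun x => (forced_of_forced_lsva hl (hB (.inl x))).1 x rfl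
    omega

lemma zfNum_lsva [Finite α] (hm : 2 ≤ m) : zfNum (lsva H v m) = zfNum H + (m - 1) :=
  le_antisymm (zfNum_lsva_le hm) (zfNum_add_le_zfNum_lsva (by omega))

lemma vcNum_lsva_le [Finite α] : vcNum (lsva H v m) ≤ vcNum H + 1 := by
  obtain ⟨C, hC, hcard⟩ := exists_isVC_ncard_eq_vcNum H
  have hC' : IsVC (lsva H v m) (insert (.inr none) (Sum.inl '' C)) := by
    rintro (x | _ | i) (y | _ | j) hadj <;> simp at hadj ⊢
    exact hC hadj
  calc vcNum (lsva H v m) ≤ _ := vcNum_le hC'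
    _ = vcNum H + 1 := by
      rw [Set.ncard_insert_of_notMem (by simp),
        Set.ncard_image_of_injective _ Sum.inl_injective, hcard]

lemma vcNum_add_one_le_vcNum_lsva [Finite α] (hm : 0 < m) :
    vcNum H + 1 ≤ vcNum (lsva H v m) := by
  obtain ⟨C, hC, hcard⟩ := exists_isVC_ncard_eq_vcNum (lsva H v m)
  have hH : vcNum H ≤ (Sum.inl ⁻¹' C).ncard :=
    vcNum_le fun x y hxy => hC (lsva_adj_inl_inl.2 hxy)
  have hinr : 0 < (Sum.inr ⁻¹' C).ncard := by
    refine (Set.ncard_pos).2 ?_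
    rcases hC (lsva_adj_none_inr.2 (Option.some_ne_none ⟨0, hm⟩)) with h | h
    exacts [⟨_, h⟩, ⟨_, h⟩]
  have := ncard_eq_ncard_preimage_inl_add_ncard_preimage_inr C
  omega

lemma vcNum_lsva [Finite α] (hm : 0 < m) : vcNum (lsva H v m) = vcNum H + 1 :=
  le_antisymm vcNum_lsva_le (vcNum_add_one_le_vcNum_lsva hm)

end Lsva

/-- The centre is the support vertex and the leaf `0` plays the vertex of `K_1`. -/
def starIsoLsvaBot (m : ℕ) :
    completeBipartiteGraph (Fin 1) (Fin (m + 1)) ≃g lsva (⊥ : SimpleGraph Unit) () m where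
  toFun := Sum.elim (fun _ => .inr none) (Fin.cases (.inl ()) fun j => .inr (some j))
  invFun := Sum.elim (fun _ => .inr 0) (Option.elim' (.inl 0) fun j => .inr j.succ)
  left_inv := by
    rintro (x | j)
    · simp [Subsingleton.elim x 0]
    · cases j using Fin.cases <;> simp
  right_inv := by
    rintro (_ | _ | j) <;> simp
  map_rel_iff' := by
    rintro (x | i) (y | j)
    · simp
    · cases j using Fin.cases <;> simp
    · cases i using Fin.cases <;> simp
    · cases i using Fin.cases <;> cases j using Fin.cases <;> simp

section Tight

variable {k : ℕ} {α β : Type*} {G : SimpleGraph α} {G' : SimpleGraph β}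

structure IsZFTight (k : ℕ) (G : SimpleGraph α) : Prop where
  degSet_le : ∀ x, degSet G x ≤ k
  zfNum_eq : zfNum G = (k - 2) * vcNum G + 1

lemma IsZFTight.of_iso (e : G ≃g G') (h : IsZFTight k G) : IsZFTight k G' where
  degSet_le y := by
    obtain ⟨x, rfl⟩ := e.surjective y
    exact degSet_congr e x ▸ h.degSet_le x
  zfNum_eq := by rw [← zfNum_congr e, ← vcNum_congr e, h.zfNum_eq]

lemma isZFTight_bot_unit : IsZFTight k (⊥ : SimpleGraph Unit) where
  degSet_le x := by simp [degSet]
  zfNum_eq := by rw [zfNum_eq_one, vcNum_bot, mul_zero]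

lemma IsZFTight.lsva [Finite α] (hk : 3 ≤ k) (h : IsZFTight k G) {v : α}
    (hv : degSet G v < k) : IsZFTight k (lsva G v (k - 1)) where
  degSet_le := by
    rintro (x | _ | i)
    · by_cases hx : x = v
      · rw [hx, degSet_lsva_inl_self]
        omega
      · rw [degSet_lsva_inl_of_ne hx]
        exact h.degSet_le x
    · rw [degSet_lsva_none]
      omega
    · rw [degSet_lsva_some]
      omega
  zfNum_eq := by
    obtain ⟨j, rfl⟩ : ∃ j, k = j + 2 := ⟨k - 2, by omega⟩
    rw [zfNum_lsva (by omega), vcNum_lsva (by omega), h.zfNum_eq,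
      show j + 2 - 1 - 1 = j by omega, Nat.add_sub_cancel]
    ring

lemma isZFTight_star (hk : 3 ≤ k) : IsZFTight k (completeBipartiteGraph (Fin 1) (Fin k)) := by
  obtain ⟨m, rfl⟩ : ∃ m, k = m + 1 := ⟨k - 1, by omega⟩
  exact (isZFTight_bot_unit.lsva hk (by simp [degSet])).of_iso (starIsoLsvaBot m).symm

lemma degSet_star_center (hk : 0 < k) :
    degSet (completeBipartiteGraph (Fin 1) (Fin k)) (.inl 0) = k := by
  obtain ⟨m, rfl⟩ : ∃ m, k = m + 1 := ⟨k - 1, by omega⟩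
  exact (degSet_congr (starIsoLsvaBot m) (.inl 0)).symm.trans degSet_lsva_none

end Tight

section Chain

variable {m : ℕ} {α β : Type} {G : SimpleGraph α} {H : SimpleGraph β}

lemma LSVAChain.finite [Finite α] (h : LSVAChain m G H) : Finite β := by
  induction h with
  | refl => assumption
  | step _ _ _ ih => infer_instance

lemma LSVAChain.exists_degSet_eq [Finite α] (h : LSVAChain m G H)
    (hG : ∃ x, degSet G x = m + 1) : ∃ x, degSet H x = m + 1 := by
  cases h with
  | refl => exact hG
  | step _ _ h =>
    have := h.finite
    exact ⟨.inr none, degSet_lsva_none⟩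

lemma LSVAChain.isZFTight {k : ℕ} (hk : 3 ≤ k) [Finite α] (h : LSVAChain (k - 1) G H)
    (hG : IsZFTight k G) : IsZFTight k H := by
  induction h with
  | refl => exact hG
  | step v hv h ih =>
    have := h.finite
    exact ih.lsva hk (by rw [degSet]; omega)

end Chain

theorem stmt16_general (k : ℕ) (hk : 3 ≤ k) {V : Type} (T : SimpleGraph V)
    (hT : LSVAChain (k - 1) (completeBipartiteGraph (Fin 1) (Fin k)) T) :
    maxDeg T = k ∧ zfNum T = (k - 2) * vcNum T + 1 := by
  have hTight := hT.isZFTight hk (isZFTight_star hk)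
  obtain ⟨x, hx⟩ :=
    hT.exists_degSet_eq ⟨.inl 0, (degSet_star_center (by omega)).trans (by omega)⟩
  exact ⟨maxDeg_eq_of_forall_le_of_exists_eq hTight.degSet_le ⟨x, hx.trans (by omega)⟩,
    hTight.zfNum_eq⟩

/-- For `k ≥ 3`, every graph obtained from the star `K_{1,k}` by a finite
sequence of `(k-1)`-leaf support vertex additions has maximum degree `k` and satisfies
`Z(T) = (k - 2)·β(T) + 1`. -/
theorem stmt16 (k : ℕ) (hk : 3 ≤ k) {V : Type} [Fintype V] (T : SimpleGraph V)
    (hT : LSVAChain (k - 1) (completeBipartiteGraph (Fin 1) (Fin k)) T) :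
    maxDeg T = k ∧ zfNum T = (k - 2) * vcNum T + 1 :=
  stmt16_general k hk T hT

end ZFPaper
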